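/- arXiv:1711.03466 — 2 statements merged into one kernel-verified Lean document; each statement's English description precedes it below -/
import Mathlib

section
/- For α = 1, a strategy profile s in a network creation game is a pure Nash equilibrium if and only if s is rational and the graph G(s) has diameter at most 2. -/
open SimpleGraph ENNReal Finset

/-- A strategy profile: each player chooses a set of other players. -/
abbrev Profile (n : ℕ) := Fin n → Finset (Fin n)

/-- Validity: no player buys an edge to herself. -/
def Valid {n : ℕ} (s : Profile n) : Prop := ∀ i, i ∉ s i

/-- The graph formed by a strategy profile: `{i,j}` is an edge iff `j ∈ s i` or `i ∈ s j`. -/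
def NCGraph {n : ℕ} (s : Profile n) : SimpleGraph (Fin n) :=
  SimpleGraph.fromRel (fun i j => j ∈ s i)

instance {n : ℕ} (s : Profile n) : DecidableRel (NCGraph s).Adj := fun i j =>
  decidable_of_iff (i ≠ j ∧ (j ∈ s i ∨ i ∈ s j))
    (SimpleGraph.fromRel_adj (fun a b => b ∈ s a) i j).symm

/-- Distance cost of player `i`: sum of (extended) distances to all players. -/
noncomputable def dCost {n : ℕ} (s : Profile n) (i : Fin n) : ℝ≥0∞ :=
  ∑ j, ((NCGraph s).edist i j : ℝ≥0∞)

/-- Total cost of player `i` in the network creation game with parameter `α`. -/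
noncomputable def cost {n : ℕ} (α : ℝ) (s : Profile n) (i : Fin n) : ℝ≥0∞ :=
  ENNReal.ofReal α * (s i).card + dCost s i

/-- Social cost: sum of all players' costs. -/
noncomputable def socialCost {n : ℕ} (α : ℝ) (s : Profile n) : ℝ≥0∞ :=
  ∑ i, cost α s i

/-- A profile is rational if no edge is bought by both of its endpoints. -/
def Rational {n : ℕ} (s : Profile n) : Prop := ∀ i j, j ∈ s i → i ∉ s j

/-- Pure Nash equilibrium. -/
def IsNashEq {n : ℕ} (α : ℝ) (s : Profile n) : Prop :=
  ∀ (i : Fin n) (t : Finset (Fin n)), i ∉ t →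
    cost α s i ≤ cost α (Function.update s i t) i

/-- Strong equilibrium: no nonempty coalition has a joint deviation strictly
decreasing every member's cost. -/
def IsStrongEq {n : ℕ} (α : ℝ) (s : Profile n) : Prop :=
  ∀ (K : Finset (Fin n)) (s' : Profile n), K.Nonempty → Valid s' →
    (∀ i ∉ K, s' i = s i) → ∃ i ∈ K, cost α s i ≤ cost α s' i

/-- A star graph: one center adjacent to all other vertices, and no other edges. -/
def IsStar {V : Type*} (G : SimpleGraph V) : Prop :=
  ∃ c : V, ∀ i j : V, G.Adj i j ↔ i ≠ j ∧ (i = c ∨ j = c)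

/-!
Buying one edge costs `1` and shortens the buyer's distance to its other endpoint from
`d` to `1`. Hence at an equilibrium no edge is bought twice (dropping one copy keeps the
graph and saves `1`), and no pair is at distance `≥ 3` (buying the edge saves `≥ 2`).
Conversely, for a rational profile of diameter `≤ 2`, player `i`'s cost is the sum over `k`
of `d(i, k) + [i buys ik]`. This term is at most `2`, and equals `1` when `k` buys `ik`;
after any deviation of `i` it is at least `2`, except when `k` buys `ik`, where it is still
at least `1`.
-/

namespace SimpleGraph

variable {V : Type*} {G H : SimpleGraph V} {u v : V}

lemma two_le_edist_of_not_adj (huv : u ≠ v) (h : ¬ G.Adj u v) : 2 ≤ G.edist u v := by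
  have : ¬ G.edist u v ≤ 1 := by rw [edist_le_one_iff_adj_or_eq]; tauto
  exact Order.add_one_le_of_lt (not_le.mp this)

lemma sum_edist_add_edist_le_of_le_of_adj [Fintype V] (hGH : G ≤ H) (huv : H.Adj u v) :
    ∑ w, (H.edist u w : ℝ≥0∞) + G.edist u v ≤ ∑ w, (G.edist u w : ℝ≥0∞) + 1 := by
  classical
  rw [← sum_erase_add _ _ (mem_univ v), ← sum_erase_add _ _ (mem_univ v),
    edist_eq_one_iff_adj.mpr huv, ENat.toENNReal_one, add_right_comm]
  gcongr

end SimpleGraph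

section NetworkCreation

variable {n : ℕ} {s : Profile n} {α : ℝ}

lemma ncGraph_adj (s : Profile n) (i j : Fin n) :
    (NCGraph s).Adj i j ↔ i ≠ j ∧ (j ∈ s i ∨ i ∈ s j) :=
  fromRel_adj _ i j

lemma Rational.valid (hr : Rational s) : Valid s := fun i hi => hr i i hi hi

lemma ncGraph_mono {s' : Profile n} (h : ∀ i, s i ⊆ s' i) : NCGraph s ≤ NCGraph s' := by
  intro i j hij
  rw [ncGraph_adj] at hij ⊢
  exact ⟨hij.1, hij.2.imp (fun hj => h i hj) (fun hi => h j hi)⟩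

lemma ncGraph_update_adj_self (s : Profile n) (i : Fin n) (t : Finset (Fin n)) (k : Fin n) :
    (NCGraph (Function.update s i t)).Adj i k ↔ i ≠ k ∧ (k ∈ t ∨ i ∈ s k) := by
  rw [ncGraph_adj]
  rcases eq_or_ne k i with rfl | hki
  · simp
  · simp [Function.update_of_ne hki]

lemma ncGraph_update_eq {i : Fin n} {t : Finset (Fin n)}
    (h : ∀ k, k ≠ i → (k ∈ t ∨ i ∈ s k ↔ k ∈ s i ∨ i ∈ s k)) :
    NCGraph (Function.update s i t) = NCGraph s := by
  ext u v
  rw [ncGraph_adj, ncGraph_adj]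
  refine and_congr_right fun huv => ?_
  rcases eq_or_ne u i with rfl | hui
  · simpa [Function.update_of_ne huv.symm] using h v huv.symm
  rcases eq_or_ne v i with rfl | hvi
  · simpa [Function.update_of_ne hui, or_comm] using h u hui
  · simp [Function.update_of_ne hui, Function.update_of_ne hvi]

lemma cost_one_eq_sum (s : Profile n) (i : Fin n) :
    cost 1 s i = ∑ k, (((NCGraph s).edist i k + if k ∈ s i then 1 else 0 : ℕ∞) : ℝ≥0∞) := by
  simp only [ENat.toENNReal_add, sum_add_distrib, cost, dCost, ENNReal.ofReal_one, one_mul]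
  rw [add_comm]
  simp [apply_ite]

lemma IsNashEq.cost_ne_top (h : IsNashEq α s) (i : Fin n) : cost α s i ≠ ⊤ := by
  set t := univ.erase i
  refine ne_top_of_le_ne_top ?_ (h i t (notMem_erase i _))
  refine add_ne_top.mpr ⟨mul_ne_top ofReal_ne_top (natCast_ne_top _), ?_⟩
  refine sum_ne_top.mpr fun k _ => ?_
  have hnear : (NCGraph (Function.update s i t)).edist i k ≤ 1 := by
    rw [edist_le_one_iff_adj_or_eq, ncGraph_update_adj_self]
    rcases eq_or_ne i k with rfl | hik
    · exact Or.inr rfl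
    · exact Or.inl ⟨hik, Or.inl (by simp [t, hik.symm])⟩
  exact ENat.toENNReal_ne_top.mpr (ne_top_of_le_ne_top ENat.one_ne_top hnear)

lemma IsNashEq.rational (hα : 0 < α) (h : IsNashEq α s) : Rational s := by
  intro i j hj hi
  -- erasing `i` too gives a legal deviation even if `i ∈ s i`
  set t := ((s i).erase j).erase i
  have hgraph : NCGraph (Function.update s i t) = NCGraph s := by
    refine ncGraph_update_eq fun k hki => ?_
    rcases eq_or_ne k j with rfl | hkj <;> simp [t, *]
  have hcard : t.card < (s i).card :=
    card_erase_le.trans_lt (card_erase_lt_of_mem hj)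
  have hD : dCost s i ≠ ⊤ := (add_ne_top.mp (h.cost_ne_top i)).2
  refine (h i t (notMem_erase i _)).not_gt ?_
  simp only [cost, dCost, hgraph, Function.update_self] at hD ⊢
  gcongr
  exact ofReal_ne_top

lemma IsNashEq.edist_le_two (hα : α < 2) (hv : Valid s) (h : IsNashEq α s) (i j : Fin n) :
    (NCGraph s).edist i j ≤ 2 := by
  by_contra! hfar
  obtain ⟨hij, -, -⟩ := two_lt_edist_iff.mp hfar
  set t := insert j (s i)
  set s' := Function.update s i t
  have hle : NCGraph s ≤ NCGraph s' := ncGraph_mono fun k => by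
    rcases eq_or_ne k i with rfl | hki
    · simp only [s', Function.update_self]
      exact subset_insert j (s k)
    · simp [s', Function.update_of_ne hki]
  have hadj : (NCGraph s').Adj i j :=
    (ncGraph_update_adj_self s i t j).mpr ⟨hij, Or.inl (mem_insert_self j _)⟩
  have hsave : cost α s' i + (NCGraph s).edist i j ≤ cost α s i + (ENNReal.ofReal α + 1) :=
    calc cost α s' i + (NCGraph s).edist i j
        = ENNReal.ofReal α * t.card + (dCost s' i + (NCGraph s).edist i j) := by
          simp only [cost, s', Function.update_self, add_assoc]
      _ ≤ ENNReal.ofReal α * ((s i).card + 1) + (dCost s i + 1) := by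
          refine add_le_add ?_ (sum_edist_add_edist_le_of_le_of_adj hle hadj)
          gcongr
          exact_mod_cast card_insert_le j (s i)
      _ = cost α s i + (ENNReal.ofReal α + 1) := by rw [cost]; ring
  have hgain : ENNReal.ofReal α + 1 < (NCGraph s).edist i j :=
    calc ENNReal.ofReal α + 1 < 2 + 1 := by
          refine ENNReal.add_lt_add_right one_ne_top ?_
          simpa using (ofReal_lt_ofReal_iff two_pos).mpr hα
      _ ≤ (NCGraph s).edist i j := by exact_mod_cast Order.add_one_le_of_lt hfar
  have hlt : cost α s' i + (NCGraph s).edist i j < cost α s i + (NCGraph s).edist i j :=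
    hsave.trans_lt (ENNReal.add_lt_add_left (h.cost_ne_top i) hgain)
  exact (h i t (by simp [t, hij, hv i])).not_gt (lt_of_add_lt_add_right hlt)

lemma edist_add_indicator_le_of_rational (hr : Rational s) {i : Fin n}
    (hd : ∀ k, (NCGraph s).edist i k ≤ 2) {t : Finset (Fin n)} (hit : i ∉ t) (k : Fin n) :
    (NCGraph s).edist i k + (if k ∈ s i then 1 else 0) ≤
      (NCGraph (Function.update s i t)).edist i k + (if k ∈ t then 1 else 0) := by
  rcases eq_or_ne i k with rfl | hik
  · simp [hr.valid i, hit]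
  set H := NCGraph (Function.update s i t)
  by_cases hki : i ∈ s k
  · have hG : (NCGraph s).edist i k = 1 :=
      edist_eq_one_iff_adj.mpr ((ncGraph_adj s i k).mpr ⟨hik, Or.inr hki⟩)
    calc (NCGraph s).edist i k + (if k ∈ s i then 1 else 0) = 1 := by simp [hG, hr k i hki]
      _ ≤ H.edist i k := Order.one_le_iff_pos.mpr (edist_pos_of_ne hik)
      _ ≤ _ := le_self_add
  have hle_two : (NCGraph s).edist i k + (if k ∈ s i then 1 else 0) ≤ 2 := by
    split_ifs with hk
    · rw [edist_eq_one_iff_adj.mpr ((ncGraph_adj s i k).mpr ⟨hik, Or.inl hk⟩), one_add_one_eq_two]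
    · simpa using hd k
  refine hle_two.trans ?_
  split_ifs with hkt
  · rw [← one_add_one_eq_two]
    gcongr
    exact Order.one_le_iff_pos.mpr (edist_pos_of_ne hik)
  · have hnadj : ¬ H.Adj i k := by simp [H, ncGraph_update_adj_self, hkt, hki]
    simpa using two_le_edist_of_not_adj hik hnadj

theorem isNashEq_one_of_rational (hr : Rational s) (hd : ∀ i j, (NCGraph s).edist i j ≤ 2) :
    IsNashEq 1 s := by
  intro i t hit
  rw [cost_one_eq_sum, cost_one_eq_sum, Function.update_self]
  exact sum_le_sum fun k _ =>
    ENat.toENNReal_le.mpr (edist_add_indicator_le_of_rational hr (hd i) hit k)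

end NetworkCreation

theorem stmt6_general {n : ℕ} (s : Profile n) :
    IsNashEq 1 s ↔ Rational s ∧ ∀ i j : Fin n, (NCGraph s).edist i j ≤ 2 := by
  refine ⟨fun h => ?_, fun ⟨hr, hd⟩ => isNashEq_one_of_rational hr hd⟩
  have hr : Rational s := h.rational one_pos
  exact ⟨hr, h.edist_le_two one_lt_two hr.valid⟩

/-- For `α = 1`, a profile is a Nash equilibrium iff it is rational and the
graph has diameter at most `2`. -/
theorem stmt6 {n : ℕ} (hn : 3 ≤ n) (s : Profile n) (hv : Valid s) :
    IsNashEq 1 s ↔ Rational s ∧ ∀ i j : Fin n, (NCGraph s).edist i j ≤ 2 :=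
  stmt6_general s
end

section
/- For α > 1 and n = 3, network creation games have the coalitional finite improvement property: the function Φ(s) = Σ_i (c_i^d(s) + 2·c_i^b(s)) strictly decreases along every profitable coalitional deviation between profiles with connected graphs, hence every coalitional improvement path is finite. -/
open SimpleGraph ENNReal Finset

/-- A coalitional improvement step: the set of players changing their strategy all
strictly decrease their cost. -/
def CoalStep {n : ℕ} (α : ℝ) (s s' : Profile n) : Prop :=
  Valid s' ∧ s' ≠ s ∧ ∀ i, s' i ≠ s i → cost α s' i < cost α s i

/-- The generalized ordinal potential `Φ(s) = Σ_i (c_i^d(s) + 2 c_i^b(s))`. -/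
noncomputable def Phi {n : ℕ} (α : ℝ) (s : Profile n) : ℝ≥0∞ :=
  ∑ i, (dCost s i + 2 * (ENNReal.ofReal α * (s i).card))

/-! On three vertices every connected graph has diameter at most `2`, so `c_i^d = 4 - deg i` and
`Φ = 12 - 2|E| + 2α·Σ_i |s_i|`. A degree changes by at most `1 < α`, so no deviator buys more
edges than before. If some deviator buys fewer, `Φ` drops by at least `2α > 2`, while `|E|` can
fall by at most one (`2 ≤ |E| ≤ 3`). Otherwise every deviator strictly gains degree, hence becomes
adjacent to everybody; then no edge is lost and some degree grows, so `|E|` grows and `Φ` drops.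
Along an improvement path every profile after the first is connected (a deviator's new cost is
finite), so from there on `Φ` strictly decreases and the profiles are pairwise distinct, which
is impossible as there are finitely many profiles. -/

namespace SimpleGraph

variable {V : Type*} {G : SimpleGraph V} {u v : V}

lemma Reachable.edist_lt_card [Fintype V] (h : G.Reachable u v) :
    G.edist u v < Fintype.card V := by
  obtain ⟨p, hp, hlen⟩ := h.exists_path_of_dist
  rw [← h.coe_dist_eq_edist, ← hlen]
  exact_mod_cast hp.length_lt

lemma edist_eq_ite_of_edist_le_two [DecidableEq V] [DecidableRel G.Adj] (h : G.edist u v ≤ 2) :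
    G.edist u v = ((if u = v then 0 else if G.Adj u v then 1 else 2 : ℕ) : ℕ∞) := by
  split_ifs with huv hadj
  · simp [huv]
  · simpa using hadj
  · have h1 : ¬ G.edist u v ≤ 1 := by simp [edist_le_one_iff_adj_or_eq, hadj, huv]
    lift G.edist u v to ℕ using ne_top_of_le_ne_top (by simp) h with n
    norm_cast at h h1 ⊢
    omega

lemma sum_edist_add_degree [Fintype V] [DecidableEq V] [DecidableRel G.Adj]
    (h : ∀ v, G.edist u v ≤ 2) :
    ∑ v, G.edist u v + G.degree u = 2 * (Fintype.card V - 1 : ℕ) := by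
  simp_rw [edist_eq_ite_of_edist_le_two (h _)]
  rw [← card_neighborFinset_eq_degree, neighborFinset_eq_filter]
  norm_cast
  rw [card_filter, ← sum_add_distrib]
  have hpt : ∀ v, ((if u = v then 0 else if G.Adj u v then 1 else 2) +
      if G.Adj u v then 1 else 0) = if u = v then 0 else 2 := by
    intro v
    split_ifs <;> simp_all
  simp [hpt, sum_ite, filter_ne, mul_comm]

lemma Connected.two_mul_card_sub_one_le_sum_degrees [Fintype V] [DecidableRel G.Adj]
    (h : G.Connected) : 2 * (Fintype.card V - 1) ≤ ∑ v, G.degree v := by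
  have := h.card_vert_le_card_edgeSet_add_one
  rw [sum_degrees_eq_twice_card_edges, edgeFinset_card]
  simp only [Nat.card_eq_fintype_card] at this
  omega

end SimpleGraph

section ThreePlayers

variable {s : Profile 3}

lemma NCGraph_adj_of_mem {i j : Fin 3} (hij : i ≠ j) (h : j ∈ s i) : (NCGraph s).Adj i j := by
  simp [NCGraph, hij, h]

lemma dCost_eq_ofReal (hc : (NCGraph s).Connected) (i : Fin 3) :
    dCost s i = ENNReal.ofReal (4 - (NCGraph s).degree i) := by
  have hle : ∀ j, (NCGraph s).edist i j ≤ 2 := fun j =>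
    Order.le_of_lt_add_one (hc i j).edist_lt_card
  have hsum := sum_edist_add_degree hle
  have hfin : ∑ j, (NCGraph s).edist i j ≠ ⊤ := fun h => by norm_num [h] at hsum
  lift ∑ j, (NCGraph s).edist i j to ℕ using hfin with m hm
  norm_cast at hsum
  have hcast : dCost s i = ((∑ j, (NCGraph s).edist i j : ℕ∞) : ℝ≥0∞) :=
    (map_sum ENat.toENNRealRingHom _ _).symm
  rw [hcast, ← hm, ENat.toENNReal_coe, ← ENNReal.ofReal_natCast]
  congr 1
  have hsum' : (m : ℝ) + (NCGraph s).degree i = 4 := by exact_mod_cast hsum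
  linarith

lemma degree_pos_of_connected (hc : (NCGraph s).Connected) (i : Fin 3) :
    0 < (NCGraph s).degree i :=
  hc.preconnected.degree_pos_of_nontrivial i

lemma degree_le_two (i : Fin 3) : (NCGraph s).degree i ≤ 2 :=
  Nat.le_of_lt_succ ((NCGraph s).degree_lt_card_verts i)

lemma cost_eq_ofReal {α : ℝ} (hα : 0 ≤ α) (hc : (NCGraph s).Connected) (i : Fin 3) :
    cost α s i = ENNReal.ofReal (α * #(s i) + (4 - (NCGraph s).degree i)) := by
  have hdeg : ((NCGraph s).degree i : ℝ) ≤ 2 := by exact_mod_cast degree_le_two i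
  rw [cost, dCost_eq_ofReal hc, ← ofReal_natCast, ← ofReal_mul hα,
    ← ofReal_add (by positivity) (by linarith)]

lemma Phi_eq_ofReal {α : ℝ} (hα : 0 ≤ α) (hc : (NCGraph s).Connected) :
    Phi α s = ENNReal.ofReal (∑ i, ((4 - (NCGraph s).degree i) + 2 * (α * #(s i)))) := by
  have hdeg : ∀ i, ((NCGraph s).degree i : ℝ) ≤ 2 := fun i => by exact_mod_cast degree_le_two i
  rw [Phi, ofReal_sum_of_nonneg (fun i _ => add_nonneg (by linarith [hdeg i]) (by positivity))]
  refine sum_congr rfl fun i _ => ?_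
  rw [dCost_eq_ofReal hc, ← ofReal_natCast, ← ofReal_mul hα, ← ofReal_ofNat 2,
    ← ofReal_mul zero_le_two, ← ofReal_add (by linarith [hdeg i]) (by positivity)]

variable {α : ℝ} {s' : Profile 3}

lemma cost_lt_cost_iff (hα : 0 ≤ α) (hc : (NCGraph s).Connected) (hc' : (NCGraph s').Connected)
    (i : Fin 3) :
    cost α s' i < cost α s i ↔
      α * #(s' i) - (NCGraph s').degree i < α * #(s i) - (NCGraph s).degree i := by
  have hdeg : ((NCGraph s).degree i : ℝ) ≤ 2 := by exact_mod_cast degree_le_two i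
  have hpos : 0 < α * #(s i) + (4 - (NCGraph s).degree i) := by
    nlinarith [Nat.cast_nonneg (α := ℝ) #(s i)]
  rw [cost_eq_ofReal hα hc, cost_eq_ofReal hα hc', ofReal_lt_ofReal_iff hpos]
  constructor <;> intro h <;> linarith

lemma Phi_lt_Phi_iff (hα : 0 ≤ α) (hc : (NCGraph s).Connected) (hc' : (NCGraph s').Connected) :
    Phi α s' < Phi α s ↔
      2 * α * ∑ i, (#(s' i) : ℝ) - ∑ i, ((NCGraph s').degree i : ℝ) <
        2 * α * ∑ i, (#(s i) : ℝ) - ∑ i, ((NCGraph s).degree i : ℝ) := by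
  have hdeg : ∀ i, ((NCGraph s).degree i : ℝ) ≤ 2 := fun i => by exact_mod_cast degree_le_two i
  have hpos : 0 < ∑ i, ((4 - (NCGraph s).degree i) + 2 * (α * #(s i)) : ℝ) :=
    sum_pos (fun i _ => by nlinarith [hdeg i]) univ_nonempty
  rw [Phi_eq_ofReal hα hc, Phi_eq_ofReal hα hc', ofReal_lt_ofReal_iff hpos]
  simp only [sum_add_distrib, sum_sub_distrib, ← mul_sum]
  constructor <;> intro h <;> linarith

lemma card_le_card_of_cost_lt (hα : 1 < α) (hc : (NCGraph s).Connected)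
    (hc' : (NCGraph s').Connected) {i : Fin 3} (hi : cost α s' i < cost α s i) :
    #(s' i) ≤ #(s i) := by
  rw [cost_lt_cost_iff (by linarith) hc hc'] at hi
  by_contra! hlt
  have hb : (#(s i) : ℝ) + 1 ≤ #(s' i) := by exact_mod_cast hlt
  have hdeg : (1 : ℝ) ≤ (NCGraph s).degree i := by exact_mod_cast degree_pos_of_connected hc i
  have hdeg' : ((NCGraph s').degree i : ℝ) ≤ 2 := by exact_mod_cast degree_le_two i
  nlinarith

lemma degree_lt_degree_of_cost_lt (hα : 0 ≤ α) (hc : (NCGraph s).Connected)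
    (hc' : (NCGraph s').Connected) {i : Fin 3} (hi : cost α s' i < cost α s i)
    (hb : #(s' i) = #(s i)) : (NCGraph s).degree i < (NCGraph s').degree i := by
  rw [cost_lt_cost_iff hα hc hc', hb] at hi
  exact_mod_cast (sub_lt_sub_iff_left _).mp hi

lemma isUniversal_of_cost_lt (hα : 0 ≤ α) (hc : (NCGraph s).Connected)
    (hc' : (NCGraph s').Connected) {i : Fin 3} (hi : cost α s' i < cost α s i)
    (hb : #(s' i) = #(s i)) : (NCGraph s').IsUniversal i := by
  rw [← degree_eq_card_sub_one, Fintype.card_fin]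
  have := degree_lt_degree_of_cost_lt hα hc hc' hi hb
  have := degree_pos_of_connected hc i
  have := degree_le_two (s := s') i
  omega

lemma NCGraph_le_of_card_eq (hα : 0 ≤ α) (hc : (NCGraph s).Connected)
    (hc' : (NCGraph s').Connected) (hdev : ∀ i, s' i ≠ s i → cost α s' i < cost α s i)
    (hb : ∀ i, #(s' i) = #(s i)) : NCGraph s ≤ NCGraph s' := by
  have hbought : ∀ i j, i ≠ j → j ∈ s i → (NCGraph s').Adj i j := by
    intro i j hij hj
    by_cases hi : s' i = s i
    · exact NCGraph_adj_of_mem hij (hi ▸ hj)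
    · exact isUniversal_of_cost_lt hα hc hc' (hdev i hi) (hb i) hij
  intro i j hij
  obtain ⟨hne, hj | hi⟩ := (fromRel_adj _ i j).mp hij
  · exact hbought i j hne hj
  · exact (hbought j i hne.symm hi).symm

lemma Phi_lt_Phi_of_card_lt (hα : 1 < α) (hc : (NCGraph s).Connected)
    (hc' : (NCGraph s').Connected) (hle : ∀ i, #(s' i) ≤ #(s i)) (hlt : ∃ i, #(s' i) < #(s i)) :
    Phi α s' < Phi α s := by
  rw [Phi_lt_Phi_iff (by linarith) hc hc']
  have hb : ∑ i, #(s' i) + 1 ≤ ∑ i, #(s i) :=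
    sum_lt_sum (fun i _ => hle i) (by simpa using hlt)
  have hb' : ∑ i, (#(s' i) : ℝ) + 1 ≤ ∑ i, (#(s i) : ℝ) := by exact_mod_cast hb
  have hdeg : ∑ i, (NCGraph s).degree i ≤ 6 :=
    (sum_le_sum fun i _ => degree_le_two i).trans_eq (by simp)
  have hdeg' : 4 ≤ ∑ i, (NCGraph s').degree i := by
    simpa using hc'.two_mul_card_sub_one_le_sum_degrees
  have hdegR : ∑ i, ((NCGraph s).degree i : ℝ) ≤ ∑ i, ((NCGraph s').degree i : ℝ) + 2 := by
    exact_mod_cast (by omega : ∑ i, (NCGraph s).degree i ≤ ∑ i, (NCGraph s').degree i + 2)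
  nlinarith

lemma Phi_lt_Phi_of_le (hα : 0 ≤ α) (hc : (NCGraph s).Connected)
    (hc' : (NCGraph s').Connected) (hle : NCGraph s ≤ NCGraph s') (hb : ∀ i, #(s' i) = #(s i))
    (hlt : ∃ i, (NCGraph s).degree i < (NCGraph s').degree i) : Phi α s' < Phi α s := by
  rw [Phi_lt_Phi_iff hα hc hc']
  have hdeg : ∑ i, (NCGraph s).degree i < ∑ i, (NCGraph s').degree i :=
    sum_lt_sum (fun i _ => degree_le_of_le hle) (by simpa using hlt)
  have hdegR : ∑ i, ((NCGraph s).degree i : ℝ) < ∑ i, ((NCGraph s').degree i : ℝ) := by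
    exact_mod_cast hdeg
  simp only [hb]
  linarith

theorem Phi_lt_Phi_of_cost_lt (hα : 1 < α) (hc : (NCGraph s).Connected)
    (hc' : (NCGraph s').Connected) (hne : s' ≠ s)
    (hdev : ∀ i, s' i ≠ s i → cost α s' i < cost α s i) : Phi α s' < Phi α s := by
  have hle : ∀ i, #(s' i) ≤ #(s i) := fun i => by
    by_cases hi : s' i = s i
    · rw [hi]
    · exact card_le_card_of_cost_lt hα hc hc' (hdev i hi)
  by_cases hlt : ∃ i, #(s' i) < #(s i)
  · exact Phi_lt_Phi_of_card_lt hα hc hc' hle hlt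
  simp only [not_exists, not_lt] at hlt
  have hb : ∀ i, #(s' i) = #(s i) := fun i => (hle i).antisymm (hlt i)
  obtain ⟨i, hi⟩ := Function.ne_iff.mp hne
  exact Phi_lt_Phi_of_le (by linarith) hc hc' (NCGraph_le_of_card_eq (by linarith) hc hc' hdev hb)
    hb ⟨i, degree_lt_degree_of_cost_lt (by linarith) hc hc' (hdev i hi) (hb i)⟩

end ThreePlayers

lemma connected_of_cost_ne_top {n : ℕ} {α : ℝ} {s : Profile n} {i : Fin n}
    (h : cost α s i ≠ ⊤) : (NCGraph s).Connected := by
  have hd : dCost s i ≠ ⊤ := fun hd => h (by rw [cost, hd, add_top])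
  refine (connected_iff_exists_forall_reachable _).mpr ⟨i, fun j => ?_⟩
  refine edist_ne_top_iff_reachable.mp fun hj => hd ?_
  exact ENNReal.sum_eq_top.mpr ⟨j, mem_univ j, by simp [hj]⟩

lemma CoalStep.connected {n : ℕ} {α : ℝ} {s s' : Profile n} (h : CoalStep α s s') :
    (NCGraph s').Connected := by
  obtain ⟨i, hi⟩ := Function.ne_iff.mp h.2.1
  exact connected_of_cost_ne_top (h.2.2 i hi).ne_top

/-- For `α > 1` and `n = 3`: `Φ` strictly decreases along every profitable coalitional
deviation between connected profiles, and every coalitional improvement path is finite. -/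
theorem stmt17 (α : ℝ) (hα : 1 < α) :
    (∀ s s' : Profile 3, Valid s → (NCGraph s).Connected → (NCGraph s').Connected →
      CoalStep α s s' → Phi α s' < Phi α s) ∧
    ¬∃ f : ℕ → Profile 3, Valid (f 0) ∧ ∀ k, CoalStep α (f k) (f (k + 1)) := by
  refine ⟨fun s s' _ hc hc' ⟨_, hne, hdev⟩ => Phi_lt_Phi_of_cost_lt hα hc hc' hne hdev, ?_⟩
  rintro ⟨f, -, hstep⟩
  have hanti : StrictAnti fun k => Phi α (f (k + 1)) := strictAnti_nat_of_succ_lt fun k =>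
    Phi_lt_Phi_of_cost_lt hα (hstep k).connected (hstep (k + 1)).connected (hstep (k + 1)).2.1
      (hstep (k + 1)).2.2
  exact not_injective_infinite_finite _ (Function.Injective.of_comp (f := Phi α) hanti.injective)
end
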